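/- Let f : ℕ → ℝ be positive and monotone non-decreasing, and let α_1 < ... < α_n (n ≥ 2). There exists an optimal solution to minimizing range(S)/f(|S|) + range(S̄)/f(|S̄|) over bipartitions in which v_1 ∈ S and v_n ∈ S̄. -/
import Mathlib

open Finset

noncomputable def rng {n : ℕ} (α : Fin n → ℝ) (S : Finset (Fin n)) : ℝ :=
  if h : S.Nonempty then S.sup' h α - S.inf' h α else 0

noncomputable def nval {n : ℕ} (α : Fin n → ℝ) (f : ℕ → ℝ) (T : Finset (Fin n)) : ℝ :=
  rng α T / f T.card + rng α Tᶜ / f Tᶜ.card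

lemma rng_nonneg {n : ℕ} (α : Fin n → ℝ) (B : Finset (Fin n)) : 0 ≤ rng α B := by
  unfold rng
  split
  · next h =>
      obtain ⟨x, hx⟩ := h
      exact sub_nonneg.2 (le_trans (inf'_le _ hx) (le_sup' _ hx))
  · exact le_refl 0

/-- For `f` positive and monotone non-decreasing, there exists an optimal solution to the
min normalized range sum problem in which `v₁ ∈ S` and `vₙ ∈ S̄`. -/
theorem stmt6 (n : ℕ) (hn : 2 ≤ n) (α : Fin n → ℝ) (hα : StrictMono α)
    (f : ℕ → ℝ) (hfpos : ∀ m : ℕ, 0 < m → 0 < f m) (hfmono : Monotone f) :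
    ∃ S : Finset (Fin n), (⟨0, by omega⟩ : Fin n) ∈ S ∧
      (⟨n - 1, by omega⟩ : Fin n) ∈ Sᶜ ∧
      ∀ T : Finset (Fin n), T.Nonempty → Tᶜ.Nonempty →
        rng α S / f S.card + rng α Sᶜ / f Sᶜ.card ≤
          rng α T / f T.card + rng α Tᶜ / f Tᶜ.card := by
  have hn1 : 1 ≤ n := by omega
  set bot : Fin n := ⟨0, by omega⟩ with hbotdef
  set top : Fin n := ⟨n - 1, by omega⟩ with htopdef
  have hbt : bot ≠ top := by
    simp [hbotdef, htopdef, Fin.ext_iff]; omega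
  have hle_top : ∀ i : Fin n, i ≤ top := by
    intro i
    have := i.isLt
    simp [htopdef, Fin.le_def]; omega
  have hbot_le : ∀ i : Fin n, bot ≤ i := by
    intro i; simp [hbotdef, Fin.le_def]
  have hRnn : 0 ≤ α top - α bot := sub_nonneg.2 (hα.monotone (hbot_le top))
  have hrng_le : ∀ B : Finset (Fin n), rng α B ≤ α top - α bot := by
    intro B
    unfold rng
    split
    · next h =>
      have h1 : B.sup' h α ≤ α top := sup'_le _ _ fun i _ => hα.monotone (hle_top i)
      have h2 : α bot ≤ B.inf' h α := le_inf' _ _ fun i _ => hα.monotone (hbot_le i)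
      linarith
    · next h => exact hRnn
  have hrng_full : ∀ B : Finset (Fin n), bot ∈ B → top ∈ B → rng α B = α top - α bot := by
    intro B h0 h1
    have hne : B.Nonempty := ⟨bot, h0⟩
    unfold rng
    rw [dif_pos hne]
    have hs : B.sup' hne α = α top :=
      le_antisymm (sup'_le _ _ fun i _ => hα.monotone (hle_top i)) (le_sup' _ h1)
    have hi : B.inf' hne α = α bot :=
      le_antisymm (inf'_le _ h0) (le_inf' _ _ fun i _ => hα.monotone (hbot_le i))
    rw [hs, hi]
  have hsymm : ∀ T : Finset (Fin n), nval α f Tᶜ = nval α f T := by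
    intro T; simp only [nval, compl_compl]; ring
  -- the key auxiliary partition
  set S₀ : Finset (Fin n) := univ.erase top with hS₀def
  have hS₀c : S₀ᶜ = {top} := by
    simp [hS₀def, compl_erase]
  have hS₀card : S₀.card = n - 1 := by
    simp [hS₀def, card_erase_of_mem, card_univ]
  have hkey : ∀ T : Finset (Fin n), Tᶜ.Nonempty → bot ∈ T → top ∈ T →
      nval α f S₀ ≤ nval α f T := by
    intro T hTc h0 h1
    have hTcard : T.card ≤ n - 1 := by
      have hsub : T ⊂ univ := ssubset_univ_iff.2 (by
        intro h; rw [h] at hTc; simp at hTc)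
      have := card_lt_card hsub
      rw [card_univ, Fintype.card_fin] at this
      omega
    have hfT : 0 < f T.card := hfpos _ (card_pos.2 ⟨bot, h0⟩)
    have hfn1 : 0 < f (n - 1) := hfpos _ (by omega)
    have hrngS₀c : rng α ({top} : Finset (Fin n)) = 0 := by
      simp [rng]
    have step1 : nval α f S₀ = rng α S₀ / f (n - 1) := by
      rw [nval, hS₀c, hS₀card, hrngS₀c]
      simp
    rw [step1]
    have step2 : rng α S₀ / f (n - 1) ≤ (α top - α bot) / f T.card := by
      calc rng α S₀ / f (n - 1) ≤ (α top - α bot) / f (n - 1) := by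
            gcongr; exact hrng_le S₀
        _ ≤ (α top - α bot) / f T.card := by
            gcongr
            exact hfmono hTcard
    calc rng α S₀ / f (n - 1) ≤ (α top - α bot) / f T.card := step2
      _ = rng α T / f T.card := by rw [hrng_full T h0 h1]
      _ ≤ nval α f T := by
          have : 0 ≤ rng α Tᶜ / f Tᶜ.card :=
            div_nonneg (rng_nonneg α _) (le_of_lt (hfpos _ (card_pos.2 hTc)))
          rw [nval]; linarith
  -- global minimizer
  have hmemfilter : ∀ T : Finset (Fin n), T.Nonempty → Tᶜ.Nonempty →
      T ∈ (univ : Finset (Finset (Fin n))).filter fun T => T.Nonempty ∧ Tᶜ.Nonempty := by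
    intro T h1 h2; simp [h1, h2]
  obtain ⟨T₀, hT₀mem, hT₀min⟩ :=
    Finset.exists_min_image ((univ : Finset (Finset (Fin n))).filter
      fun T => T.Nonempty ∧ Tᶜ.Nonempty) (nval α f)
      ⟨{bot}, by
        refine mem_filter.2 ⟨mem_univ _, ⟨bot, mem_singleton_self _⟩, ⟨top, ?_⟩⟩
        simp [hbt.symm]⟩
  rw [mem_filter] at hT₀mem
  obtain ⟨-, hT₀ne, hT₀cne⟩ := hT₀mem
  have hmin : ∀ T : Finset (Fin n), T.Nonempty → Tᶜ.Nonempty → nval α f T₀ ≤ nval α f T :=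
    fun T h1 h2 => hT₀min T (hmemfilter T h1 h2)
  by_cases h0 : bot ∈ T₀ <;> by_cases h1 : top ∈ T₀
  · -- both in T₀ : use S₀
    refine ⟨S₀, ?_, ?_, ?_⟩
    · exact mem_erase.2 ⟨hbt, mem_univ _⟩
    · rw [hS₀c]; exact mem_singleton_self _
    · intro T hT hTc
      exact le_trans (hkey T₀ hT₀cne h0 h1) (hmin T hT hTc)
  · -- bot ∈ T₀, top ∉ T₀ : use T₀
    refine ⟨T₀, h0, mem_compl.2 h1, fun T hT hTc => hmin T hT hTc⟩
  · -- bot ∉ T₀, top ∈ T₀ : use T₀ᶜ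
    refine ⟨T₀ᶜ, mem_compl.2 h0, by rwa [compl_compl], ?_⟩
    intro T hT hTc
    calc nval α f T₀ᶜ = nval α f T₀ := hsymm T₀
      _ ≤ nval α f T := hmin T hT hTc
  · -- both in T₀ᶜ : use S₀
    refine ⟨S₀, mem_erase.2 ⟨hbt, mem_univ _⟩, by rw [hS₀c]; exact mem_singleton_self _, ?_⟩
    intro T hT hTc
    have h0' : bot ∈ T₀ᶜ := mem_compl.2 h0
    have h1' : top ∈ T₀ᶜ := mem_compl.2 h1
    have : nval α f S₀ ≤ nval α f T₀ᶜ := hkey T₀ᶜ (by rwa [compl_compl]) h0' h1'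
    calc nval α f S₀ ≤ nval α f T₀ᶜ := this
      _ = nval α f T₀ := hsymm T₀
      _ ≤ nval α f T := hmin T hT hTc
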